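/- arXiv:1410.5373 — 5 statements merged into one kernel-verified Lean document; each statement's English description precedes it below -/
import Mathlib

section
/- Let λ : ℕ → (0,∞) satisfy λ(n) = o(n) and lim_{n→∞} λ(n) = ∞, and fix an arbitrarily small ε > 0. For each n, let C_n be a Bernoulli(p(n)) random m(n)×n test matrix with p(n) = 1/⌈λ(n)^{1+ε}⌉ and m(n) = ⌈e·(⌈λ(n)^{1+ε}⌉)²·log n⌉ = e·λ(n)^{2(1+ε)}·log n·(1+o(1)), drawn independently of the defective set 𝒟_n of the Poisson PGT model on n subjects with parameter λ(n), and let D̂_n be the output of the cover decoder applied to C_n and the outcome vector. Then P(D̂_n ≠ 𝒟_n) → 0 as n → ∞. -/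
open Filter Finset

/-- `P(𝒟 = S)` in the Poisson PGT model on `n` subjects with parameter `lam`. -/
noncomputable def pgtWeight (n : ℕ) (lam : ℝ) (S : Finset (Fin n)) : ℝ :=
  (Real.exp lam / ∑ d ∈ Finset.range (n + 1), lam ^ d / d.factorial) *
    lam ^ S.card * Real.exp (-lam) * (n - S.card).factorial / n.factorial

/-- Probability of a realization `C` of an i.i.d. Bernoulli(p) random test matrix. -/
noncomputable def bernWeight {m n : ℕ} (p : ℝ) (C : Fin m → Fin n → Bool) : ℝ :=
  ∏ j : Fin m, ∏ i : Fin n, if C j i then p else 1 - p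

/-- Outcome vector: test `j` is positive iff some defective participates in it. -/
def outcome {m n : ℕ} (C : Fin m → Fin n → Bool) (S : Finset (Fin n)) : Fin m → Bool :=
  fun j => decide (∃ i ∈ S, C j i = true)

/-- The cover decoder: `D̂ = {i : supp(x_i) ⊆ supp(y)}`. -/
def coverDecoder {m n : ℕ} (C : Fin m → Fin n → Bool) (y : Fin m → Bool) : Finset (Fin n) :=
  Finset.univ.filter (fun i => ∀ j, C j i = true → y j = true)

/-- Error probability of the cover decoder with an i.i.d. Bernoulli(p) test matrix of
`mn` tests, drawn independently of the defective set of the Poisson PGT model. -/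
noncomputable def errProbCover (n mn : ℕ) (lam p : ℝ) : ℝ :=
  ∑ C : Fin mn → Fin n → Bool, ∑ S : Finset (Fin n),
    bernWeight p C * pgtWeight n lam S *
      (if coverDecoder C (outcome C S) ≠ S then 1 else 0)

/-!
The cover decoder always returns a superset of the defective set `𝒟`, so it errs only when some
non-defective item `i` is covered. Given `|𝒟| = s`, a single test isolates `i` (contains `i` and no
defective) with probability `p (1 - p)^s`, independently over the `m` tests, so by the union bound
the conditional error is at most `n (1 - p (1 - p)^s)^m`. With `K = ⌈λ^(1+ε)⌉` and `p = 1/K`,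
for `s ≤ K` this is at most `n exp(-m e⁻² / K) ≤ 1/n`; and since `E|𝒟| ≤ λ`, Markov's inequality
bounds `P(|𝒟| > K)` by `λ / (K + 1) ≤ λ^(-ε)`.
-/

section BernoulliRow

variable {ι : Type*} [Fintype ι]

noncomputable def rowWeight (p : ℝ) (r : ι → Bool) : ℝ :=
  ∏ i, if r i then p else 1 - p

lemma rowWeight_nonneg {p : ℝ} (hp0 : 0 ≤ p) (hp1 : p ≤ 1) (r : ι → Bool) :
    0 ≤ rowWeight p r :=
  prod_nonneg fun i _ => by split <;> linarith

variable [DecidableEq ι]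

lemma sum_rowWeight_mul_prod (p : ℝ) (g : ι → Bool → ℝ) :
    ∑ r : ι → Bool, rowWeight p r * ∏ i, g i (r i) = ∏ i, (p * g i true + (1 - p) * g i false) := by
  simp only [rowWeight, ← prod_mul_distrib]
  rw [← Fintype.prod_sum fun i b => (if b then p else 1 - p) * g i b]
  simp

lemma sum_rowWeight (p : ℝ) : ∑ r : ι → Bool, rowWeight p r = 1 := by
  simpa using sum_rowWeight_mul_prod p fun _ _ => 1

lemma sum_rowWeight_isolated (p : ℝ) {S : Finset ι} {i : ι} (hi : i ∉ S) :
    ∑ r : ι → Bool, rowWeight p r * (if r i = true ∧ ∀ k ∈ S, r k = false then 1 else 0)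
      = p * (1 - p) ^ #S := by
  have hind : ∀ r : ι → Bool, (if r i = true ∧ ∀ k ∈ S, r k = false then (1 : ℝ) else 0)
      = ∏ k, if (k = i → r k = true) ∧ (k ∈ S → r k = false) then 1 else 0 := by
    intro r
    rw [prod_boole]
    congr 1
    exact propext ⟨fun h k _ => ⟨fun hk => hk ▸ h.1, h.2 k⟩,
      fun h => ⟨(h i (mem_univ i)).1 rfl, fun k hk => (h k (mem_univ k)).2 hk⟩⟩
  simp only [hind]
  rw [sum_rowWeight_mul_prod p fun k b => if (k = i → b = true) ∧ (k ∈ S → b = false) then 1 else 0]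
  trans ∏ k, (if k = i then p else 1) * (if k ∈ S then 1 - p else 1)
  · refine prod_congr rfl fun k _ => ?_
    by_cases hki : k = i
    · subst hki; simp [hi]
    · by_cases hkS : k ∈ S <;> simp [hki, hkS]
  · rw [prod_mul_distrib, prod_ite_eq', if_pos (mem_univ i), Fintype.prod_ite_mem, prod_const]

end BernoulliRow

lemma one_sub_mul_one_sub_pow_nonneg {p : ℝ} (hp0 : 0 ≤ p) (hp1 : p ≤ 1) (s : ℕ) :
    0 ≤ 1 - p * (1 - p) ^ s := by
  nlinarith [pow_le_one₀ (sub_nonneg.mpr hp1) (by linarith : 1 - p ≤ 1) (n := s)]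

lemma bernWeight_eq_prod_rowWeight {m n : ℕ} (p : ℝ) (C : Fin m → Fin n → Bool) :
    bernWeight p C = ∏ j, rowWeight p (C j) := rfl

lemma bernWeight_nonneg {m n : ℕ} {p : ℝ} (hp0 : 0 ≤ p) (hp1 : p ≤ 1) (C : Fin m → Fin n → Bool) :
    0 ≤ bernWeight p C :=
  prod_nonneg fun j _ => rowWeight_nonneg hp0 hp1 (C j)

lemma sum_bernWeight_mul_prod {m n : ℕ} (p : ℝ) (E : (Fin n → Bool) → ℝ) :
    ∑ C : Fin m → Fin n → Bool, bernWeight p C * ∏ j, E (C j)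
      = (∑ r : Fin n → Bool, rowWeight p r * E r) ^ m := by
  simp only [bernWeight_eq_prod_rowWeight, ← prod_mul_distrib]
  rw [← Fintype.prod_sum fun (_ : Fin m) r => rowWeight p r * E r, prod_const, card_univ,
    Fintype.card_fin]

lemma sum_bernWeight {m n : ℕ} (p : ℝ) : ∑ C : Fin m → Fin n → Bool, bernWeight p C = 1 := by
  simpa [sum_rowWeight] using sum_bernWeight_mul_prod (m := m) p fun _ => 1

section CoverDecoder

variable {m n : ℕ}

lemma subset_coverDecoder_outcome (C : Fin m → Fin n → Bool) (S : Finset (Fin n)) :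
    S ⊆ coverDecoder C (outcome C S) := by
  intro i hi
  simp only [coverDecoder, outcome, mem_filter, mem_univ, true_and, decide_eq_true_eq]
  exact fun j hj => ⟨i, hi, hj⟩

lemma mem_coverDecoder_outcome_iff {C : Fin m → Fin n → Bool} {S : Finset (Fin n)} {i : Fin n} :
    i ∈ coverDecoder C (outcome C S) ↔ ∀ j, ¬(C j i = true ∧ ∀ k ∈ S, C j k = false) := by
  simp [coverDecoder, outcome]

noncomputable def coverError (m : ℕ) (p : ℝ) (S : Finset (Fin n)) : ℝ :=
  ∑ C : Fin m → Fin n → Bool, bernWeight p C * if coverDecoder C (outcome C S) ≠ S then 1 else 0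

lemma errProbCover_eq_sum_pgtWeight_mul_coverError (lam p : ℝ) :
    errProbCover n m lam p = ∑ S, pgtWeight n lam S * coverError m p S := by
  simp only [errProbCover, coverError, mul_sum]
  rw [sum_comm]
  exact sum_congr rfl fun S _ => sum_congr rfl fun C _ => by ring

variable {p : ℝ}

lemma coverError_le_one (hp0 : 0 ≤ p) (hp1 : p ≤ 1) (S : Finset (Fin n)) :
    coverError m p S ≤ 1 := by
  calc coverError m p S ≤ ∑ C : Fin m → Fin n → Bool, bernWeight p C := by
        refine sum_le_sum fun C _ => ?_
        have := bernWeight_nonneg hp0 hp1 C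
        split_ifs <;> linarith
    _ = 1 := sum_bernWeight p

lemma sum_bernWeight_mem_coverDecoder (p : ℝ) {S : Finset (Fin n)} {i : Fin n} (hi : i ∉ S) :
    ∑ C : Fin m → Fin n → Bool, bernWeight p C * (if i ∈ coverDecoder C (outcome C S) then 1 else 0)
      = (1 - p * (1 - p) ^ #S) ^ m := by
  have hind : ∀ C : Fin m → Fin n → Bool,
      (if i ∈ coverDecoder C (outcome C S) then (1 : ℝ) else 0)
        = ∏ j, (1 - if C j i = true ∧ ∀ k ∈ S, C j k = false then 1 else 0) := by
    intro C
    have hcompl : ∀ (P : Prop) [Decidable P],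
        (1 : ℝ) - (if P then 1 else 0) = if ¬P then 1 else 0 := by
      intro P _
      split_ifs <;> simp
    simp only [hcompl, prod_boole, mem_univ, true_implies, mem_coverDecoder_outcome_iff]
  simp only [hind]
  rw [sum_bernWeight_mul_prod p fun r => 1 - if r i = true ∧ ∀ k ∈ S, r k = false then 1 else 0]
  simp only [mul_sub, mul_one, sum_sub_distrib, sum_rowWeight]
  congr 2
  -- `convert` reconciles the decidability instance of `∀ k ∈ S` chosen for `Fin n`.
  convert sum_rowWeight_isolated p hi

lemma coverError_le (hp0 : 0 ≤ p) (hp1 : p ≤ 1) (S : Finset (Fin n)) :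
    coverError m p S ≤ n * (1 - p * (1 - p) ^ #S) ^ m := by
  have hunion : ∀ C : Fin m → Fin n → Bool,
      (if coverDecoder C (outcome C S) ≠ S then (1 : ℝ) else 0)
        ≤ ∑ i ∈ Sᶜ, if i ∈ coverDecoder C (outcome C S) then 1 else 0 := by
    intro C
    split_ifs with hne
    · obtain ⟨i, hi, hiS⟩ :=
        exists_of_ssubset ((subset_coverDecoder_outcome C S).ssubset_of_ne hne.symm)
      calc (1 : ℝ) = if i ∈ coverDecoder C (outcome C S) then 1 else 0 := (if_pos hi).symm
        _ ≤ _ := single_le_sum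
            (f := fun i => if i ∈ coverDecoder C (outcome C S) then (1 : ℝ) else 0)
            (fun _ _ => by positivity) (mem_compl.mpr hiS)
    · exact sum_nonneg fun _ _ => by positivity
  have hq := one_sub_mul_one_sub_pow_nonneg hp0 hp1 #S
  calc coverError m p S
      ≤ ∑ C : Fin m → Fin n → Bool, ∑ i ∈ Sᶜ,
          bernWeight p C * if i ∈ coverDecoder C (outcome C S) then 1 else 0 := by
        refine sum_le_sum fun C _ => ?_
        rw [← mul_sum]
        exact mul_le_mul_of_nonneg_left (hunion C) (bernWeight_nonneg hp0 hp1 C)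
    _ = ∑ i ∈ Sᶜ, (1 - p * (1 - p) ^ #S) ^ m := by
        rw [sum_comm]
        exact sum_congr rfl fun i hi => sum_bernWeight_mem_coverDecoder p (mem_compl.mp hi)
    _ ≤ n * (1 - p * (1 - p) ^ #S) ^ m := by
        rw [sum_const, nsmul_eq_mul]
        gcongr
        exact_mod_cast (card_le_univ Sᶜ).trans_eq (Fintype.card_fin n)

end CoverDecoder

section PoissonPrior

variable {n : ℕ} {lam : ℝ}

lemma one_le_sum_range_pow_div_factorial (hl : 0 ≤ lam) :
    1 ≤ ∑ d ∈ range (n + 1), lam ^ d / d.factorial := by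
  calc (1 : ℝ) = lam ^ 0 / (Nat.factorial 0) := by simp
    _ ≤ _ := single_le_sum (f := fun d => lam ^ d / (d.factorial : ℝ)) (fun _ _ => by positivity)
        (mem_range.mpr n.succ_pos)

lemma pgtWeight_nonneg (hl : 0 ≤ lam) (S : Finset (Fin n)) : 0 ≤ pgtWeight n lam S := by
  have := one_le_sum_range_pow_div_factorial (n := n) hl
  unfold pgtWeight
  positivity

lemma sum_pgtWeight_mul_card (hl : 0 ≤ lam) (f : ℕ → ℝ) :
    ∑ S, pgtWeight n lam S * f #S
      = (∑ d ∈ range (n + 1), lam ^ d / d.factorial * f d)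
          / ∑ d ∈ range (n + 1), lam ^ d / d.factorial := by
  have hZ : ∑ d ∈ range (n + 1), lam ^ d / (d.factorial : ℝ) ≠ 0 :=
    (one_pos.trans_le (one_le_sum_range_pow_div_factorial hl)).ne'
  have hexp : Real.exp lam * Real.exp (-lam) = 1 := by
    rw [← Real.exp_add, add_neg_cancel, Real.exp_zero]
  rw [← powerset_univ, sum_div]
  simp only [pgtWeight]
  rw [sum_powerset_apply_card fun d =>
    _ * lam ^ d * Real.exp (-lam) * (n - d).factorial / n.factorial * f d]
  simp only [card_univ, Fintype.card_fin, nsmul_eq_mul]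
  refine sum_congr rfl fun d hd => ?_
  have hdn : d ≤ n := Nat.lt_succ_iff.mp (mem_range.mp hd)
  have hfact : (n.choose d : ℝ) * d.factorial * (n - d).factorial = n.factorial := by
    exact_mod_cast Nat.choose_mul_factorial_mul_factorial hdn
  have : (n.factorial : ℝ) ≠ 0 := by positivity
  have : (d.factorial : ℝ) ≠ 0 := by positivity
  field_simp
  linear_combination (lam ^ d * f d * (n.choose d * d.factorial * (n - d).factorial)) * hexp
    + lam ^ d * f d * hfact

lemma sum_pgtWeight (hl : 0 ≤ lam) : ∑ S : Finset (Fin n), pgtWeight n lam S = 1 := by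
  have hZ : ∑ d ∈ range (n + 1), lam ^ d / (d.factorial : ℝ) ≠ 0 :=
    (one_pos.trans_le (one_le_sum_range_pow_div_factorial hl)).ne'
  simpa [hZ] using sum_pgtWeight_mul_card (n := n) hl fun _ => 1

lemma sum_pgtWeight_mul_card_le (hl : 0 ≤ lam) :
    ∑ S : Finset (Fin n), pgtWeight n lam S * #S ≤ lam := by
  have hZ := one_le_sum_range_pow_div_factorial (n := n) hl
  rw [sum_pgtWeight_mul_card hl, div_le_iff₀ (one_pos.trans_le hZ), sum_range_succ']
  -- The numerator is `λ` times a partial sum of the denominator.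
  have hshift : ∀ d : ℕ, lam ^ (d + 1) / ((d + 1).factorial : ℝ) * ((d + 1 : ℕ) : ℝ)
      = lam * (lam ^ d / d.factorial) := by
    intro d
    rw [Nat.factorial_succ, pow_succ]
    push_cast
    field_simp
  simp only [hshift, ← mul_sum, CharP.cast_eq_zero, mul_zero, add_zero]
  gcongr
  omega

end PoissonPrior

lemma errProbCover_nonneg {n m : ℕ} {lam p : ℝ} (hl : 0 ≤ lam) (hp0 : 0 ≤ p) (hp1 : p ≤ 1) :
    0 ≤ errProbCover n m lam p :=
  sum_nonneg fun C _ => sum_nonneg fun S _ =>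
    mul_nonneg (mul_nonneg (bernWeight_nonneg hp0 hp1 C) (pgtWeight_nonneg hl S)) (by positivity)

lemma errProbCover_le {n m : ℕ} {lam p : ℝ} (hl : 0 ≤ lam) (hp0 : 0 ≤ p) (hp1 : p ≤ 1) (K : ℕ) :
    errProbCover n m lam p ≤ n * (1 - p * (1 - p) ^ K) ^ m + lam / (K + 1) := by
  set A : ℝ := n * (1 - p * (1 - p) ^ K) ^ m
  have hA : 0 ≤ A := by
    have := one_sub_mul_one_sub_pow_nonneg hp0 hp1 K
    positivity
  -- Small defective sets are handled by the union bound, large ones by Markov's inequality.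
  have hsplit : ∀ S : Finset (Fin n), coverError m p S ≤ A + #S / (K + 1) := by
    intro S
    by_cases hSK : #S ≤ K
    · have hmono : (1 - p) ^ K ≤ (1 - p) ^ #S :=
        pow_le_pow_of_le_one (by linarith) (by linarith) hSK
      have hq := one_sub_mul_one_sub_pow_nonneg hp0 hp1 #S
      calc coverError m p S ≤ n * (1 - p * (1 - p) ^ #S) ^ m := coverError_le hp0 hp1 S
        _ ≤ A := by
            refine mul_le_mul_of_nonneg_left (pow_le_pow_left₀ hq ?_ m) n.cast_nonneg
            nlinarith
        _ ≤ A + #S / (K + 1) := le_add_of_nonneg_right (by positivity)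
    · have hK : (K : ℝ) + 1 ≤ #S := by exact_mod_cast Nat.lt_of_not_le hSK
      calc coverError m p S ≤ 1 := coverError_le_one hp0 hp1 S
        _ ≤ #S / (K + 1) := (one_le_div (by positivity)).mpr hK
        _ ≤ A + #S / (K + 1) := le_add_of_nonneg_left hA
  calc errProbCover n m lam p = ∑ S, pgtWeight n lam S * coverError m p S :=
        errProbCover_eq_sum_pgtWeight_mul_coverError lam p
    _ ≤ ∑ S, pgtWeight n lam S * (A + #S / (K + 1)) :=
        sum_le_sum fun S _ => mul_le_mul_of_nonneg_left (hsplit S) (pgtWeight_nonneg hl S)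
    _ = A * ∑ S, pgtWeight n lam S + (∑ S, pgtWeight n lam S * #S) / (K + 1) := by
        rw [mul_sum, sum_div, ← sum_add_distrib]
        exact sum_congr rfl fun S _ => by ring
    _ ≤ A + lam / (K + 1) := by
        rw [sum_pgtWeight hl, mul_one]
        gcongr
        exact sum_pgtWeight_mul_card_le hl

lemma exp_neg_two_mul_le_one_sub {x : ℝ} (h0 : 0 ≤ x) (h : x ≤ 1 / 2) :
    Real.exp (-(2 * x)) ≤ 1 - x := by
  rw [Real.exp_neg, inv_le_iff_one_le_mul₀ (Real.exp_pos _)]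
  nlinarith [Real.add_one_le_exp (2 * x)]

lemma exp_neg_two_le_one_sub_inv_pow {K : ℕ} (hK : 2 ≤ K) :
    Real.exp (-2) ≤ (1 - 1 / K) ^ K := by
  have hKpos : (0 : ℝ) < K := by positivity
  have hK' : (2 : ℝ) ≤ K := by exact_mod_cast hK
  calc Real.exp (-2) = Real.exp (-(2 * (1 / K))) ^ K := by
        rw [← Real.exp_nat_mul]
        congr 1
        field_simp
    _ ≤ (1 - 1 / K) ^ K := by
        refine pow_le_pow_left₀ (Real.exp_nonneg _)
          (exp_neg_two_mul_le_one_sub (by positivity) ?_) K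
        rw [div_le_div_iff₀ hKpos (by norm_num)]
        linarith

lemma natCast_mul_one_sub_pow_le_inv {n K m : ℕ} (hn : 1 ≤ n) (hK : 6 ≤ K)
    (hm : Real.exp 1 * K ^ 2 * Real.log n ≤ m) :
    n * (1 - 1 / K * (1 - 1 / K) ^ K) ^ m ≤ (n : ℝ)⁻¹ := by
  have hnpos : (0 : ℝ) < n := by exact_mod_cast hn
  have hK6 : (6 : ℝ) ≤ K := by exact_mod_cast hK
  have hlog : 0 ≤ Real.log n := Real.log_nonneg (by exact_mod_cast hn)
  set x := 1 / (K : ℝ) * (1 - 1 / K) ^ K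
  have hx0 : Real.exp (-2) / K ≤ x := by
    rw [div_eq_mul_one_div, mul_comm]
    exact mul_le_mul_of_nonneg_left (exp_neg_two_le_one_sub_inv_pow (by omega)) (by positivity)
  have hx1 : x ≤ 1 := by
    have hK1 : 1 / (K : ℝ) ≤ 1 := by rw [div_le_one (by positivity)]; linarith
    have hK0 : 0 ≤ 1 / (K : ℝ) := by positivity
    exact mul_le_one₀ hK1 (by positivity) (pow_le_one₀ (by linarith) (by linarith))
  -- `m x ≥ K log n / e`, and `K / e ≥ 2` as `K ≥ 6 > 2e`.
  have hmx : 2 * Real.log n ≤ m * x := by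
    have he : Real.exp 1 < 3 := lt_trans Real.exp_one_lt_d9 (by norm_num)
    have hepos := Real.exp_pos 1
    have hexp2 : Real.exp (-2) = (Real.exp 1 ^ 2)⁻¹ := by
      rw [Real.exp_one_pow, ← Real.exp_neg]; norm_num
    calc 2 * Real.log n ≤ K / Real.exp 1 * Real.log n := by
          gcongr
          rw [le_div_iff₀ hepos]
          linarith
      _ = Real.exp 1 * K ^ 2 * Real.log n * (Real.exp (-2) / K) := by
          rw [hexp2]
          field_simp
      _ ≤ m * x := by gcongr
  calc (n : ℝ) * (1 - x) ^ m ≤ n * Real.exp (-(m * x)) := by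
        gcongr
        calc (1 - x) ^ m ≤ Real.exp (-x) ^ m :=
              pow_le_pow_left₀ (by linarith) (Real.one_sub_le_exp_neg x) m
          _ = Real.exp (-(m * x)) := by rw [← Real.exp_nat_mul]; ring_nf
    _ ≤ n * Real.exp (-(2 * Real.log n)) := by gcongr
    _ = (n : ℝ)⁻¹ := by
        rw [Real.exp_neg, ← Real.log_rpow hnpos, Real.exp_log (by positivity), Real.rpow_two]
        field_simp

lemma div_natCeil_rpow_add_one_le {x : ℝ} (hx : 0 < x) (ε : ℝ) :
    x / (⌈x ^ (1 + ε)⌉₊ + 1) ≤ x ^ (-ε) := by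
  calc x / (⌈x ^ (1 + ε)⌉₊ + 1) ≤ x / x ^ (1 + ε) :=
        div_le_div_of_nonneg_left hx.le (Real.rpow_pos_of_pos hx _)
          ((Nat.le_ceil _).trans (le_add_of_nonneg_right zero_le_one))
    _ = x ^ (-ε) := by rw [show -ε = 1 - (1 + ε) by ring, Real.rpow_sub hx, Real.rpow_one]

theorem stmt1_general (lam : ℕ → ℝ) (hpos : ∀ n, 0 < lam n)
    (hlaminf : Tendsto lam atTop atTop)
    (ε : ℝ) (hε : 0 < ε)
    (p : ℕ → ℝ) (hp : ∀ n, p n = 1 / (⌈lam n ^ ((1 : ℝ) + ε)⌉₊ : ℝ))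
    (m : ℕ → ℕ)
    (hm : ∀ n, m n = ⌈Real.exp 1 * (⌈lam n ^ ((1 : ℝ) + ε)⌉₊ : ℝ) ^ 2 * Real.log n⌉₊) :
    Tendsto (fun n => errProbCover n (m n) (lam n) (p n)) atTop (nhds 0) := by
  set K : ℕ → ℕ := fun n => ⌈lam n ^ ((1 : ℝ) + ε)⌉₊
  have hK6 : ∀ᶠ n in atTop, 6 ≤ K n :=
    ((tendsto_rpow_atTop (by linarith : (0 : ℝ) < 1 + ε)).comp hlaminf).eventually_ge_atTop 6
      |>.mono fun n h => by exact_mod_cast h.trans (Nat.le_ceil _)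
  have hbound : ∀ᶠ n in atTop, 0 ≤ errProbCover n (m n) (lam n) (p n) ∧
      errProbCover n (m n) (lam n) (p n) ≤ (n : ℝ)⁻¹ + lam n ^ (-ε) := by
    filter_upwards [eventually_ge_atTop 1, hK6] with n hn hKn
    have hp0 : 0 ≤ p n := by rw [hp n]; positivity
    have hp1 : p n ≤ 1 := by
      rw [hp n, div_le_one (by positivity)]
      exact_mod_cast (show 1 ≤ K n by omega)
    refine ⟨errProbCover_nonneg (hpos n).le hp0 hp1, ?_⟩
    calc errProbCover n (m n) (lam n) (p n)
        ≤ n * (1 - p n * (1 - p n) ^ K n) ^ m n + lam n / (K n + 1) :=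
          errProbCover_le (hpos n).le hp0 hp1 (K n)
      _ ≤ (n : ℝ)⁻¹ + lam n ^ (-ε) := by
          gcongr ?_ + ?_
          · rw [hp n]
            exact natCast_mul_one_sub_pow_le_inv hn hKn (by rw [hm n]; exact Nat.le_ceil _)
          · exact div_natCeil_rpow_add_one_le (hpos n) ε
  have hlim : Tendsto (fun n : ℕ => (n : ℝ)⁻¹ + lam n ^ (-ε)) atTop (nhds 0) := by
    simpa using (tendsto_inv_atTop_nhds_zero_nat (𝕜 := ℝ)).add
      ((tendsto_rpow_neg_atTop hε).comp hlaminf)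
  exact squeeze_zero' (hbound.mono fun _ h => h.1) (hbound.mono fun _ h => h.2) hlim

theorem stmt1 (lam : ℕ → ℝ) (hpos : ∀ n, 0 < lam n)
    (hlamo : Tendsto (fun n => lam n / n) atTop (nhds 0))
    (hlaminf : Tendsto lam atTop atTop)
    (ε : ℝ) (hε : 0 < ε)
    (p : ℕ → ℝ) (hp : ∀ n, p n = 1 / (⌈lam n ^ ((1 : ℝ) + ε)⌉₊ : ℝ))
    (m : ℕ → ℕ)
    (hm : ∀ n, m n = ⌈Real.exp 1 * (⌈lam n ^ ((1 : ℝ) + ε)⌉₊ : ℝ) ^ 2 * Real.log n⌉₊) :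
    Tendsto (fun n => errProbCover n (m n) (lam n) (p n)) atTop (nhds 0) :=
  stmt1_general lam hpos hlaminf ε hε p hp m hm
end

section
/- Let λ : ℕ → (0,∞) satisfy λ(n) = o(n), and for each n let H(n) = −Σ_{d=0}^{n} P(D=d)·log₂ P(w_d), where P(D=d) = c(n,λ(n))·(λ(n)^d/d!)·e^{−λ(n)} and P(w_d) = c(n,λ(n))·((n−d)!/n!)·λ(n)^d·e^{−λ(n)} is the probability of any fixed configuration with exactly d defectives (so H(n) is the Shannon entropy of the defective-indicator vector, which lower-bounds the minimum expected number m̄ of adaptive group tests by the Huffman/entropy bound). Then H(n) > λ(n)·log₂(n/λ(n))·(1+o(1)) − log₂(e)·λ(n)⁴/n², i.e., there exists δ(n) → 0 such that eventually H(n) ≥ (1−δ(n))·λ(n)·log₂(n/λ(n)) − log₂(e)·λ(n)⁴/n². Moreover, if in addition λ(n) = o((n²·log₂ n)^{1/3}), then H(n) > λ(n)·log₂(n/λ(n))·(1+o(1)). -/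
open Filter Finset

/-- The normalization constant `c(n,λ) = e^{λ}/(Σ_{d=0}^{n} λ^d/d!)` of the
right-truncated Poisson distribution. -/
noncomputable def cConst (n : ℕ) (lam : ℝ) : ℝ :=
  Real.exp lam / ∑ d ∈ Finset.range (n + 1), lam ^ d / d.factorial

/-- `P(D = d)` for the right-truncated Poisson distribution with parameters `lam` and `n`. -/
noncomputable def PD (n : ℕ) (lam : ℝ) (d : ℕ) : ℝ :=
  cConst n lam * (lam ^ d / d.factorial) * Real.exp (-lam)

/-- `P(w_d)`: probability of a fixed defective-indicator configuration with exactly `d`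
defectives in the Poisson PGT model. -/
noncomputable def Pw (n : ℕ) (lam : ℝ) (d : ℕ) : ℝ :=
  cConst n lam * ((n - d).factorial / n.factorial) * lam ^ d * Real.exp (-lam)

/-!
Write `L = log₂ (n/λ)` and `M = ⌊n/2⌋`. For `d ≤ M` we have `(n-d)!/n! ≤ (2/n)^d`, so
`P(w_d) ≤ (2λ/n)^d` and `-log₂ P(w_d) ≥ d (L - 1)`. Dropping the (nonnegative) terms with
`d > M`, the entropy is at least `(L - 1) Σ_{d ≤ M} d P(D=d) = (L - 1) λ P(D < M)`, and Markov's
inequality gives `P(D < M) ≥ 1 - λ/M ≥ 1 - 4λ/n`. Hence the entropy is at least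
`(1 - δ) λ L` with `δ = 4λ/n + 1/L → 0`.
-/

noncomputable def pgtEntropy (n : ℕ) (l : ℝ) : ℝ :=
  -∑ d ∈ range (n + 1), PD n l d * Real.logb 2 (Pw n l d)

theorem Nat.factorial_sub_mul_pow_le {n d : ℕ} (hd : d ≤ n / 2) :
    (n - d).factorial * n ^ d ≤ 2 ^ d * n.factorial := by
  have hdn : d ≤ n := hd.trans (Nat.div_le_self n 2)
  have hfac : (n - d).factorial * (n - d + 1) ^ d ≤ n.factorial := by
    simpa only [Nat.sub_add_cancel hdn] using
      Nat.factorial_mul_pow_le_factorial (m := n - d) (n := d)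
  calc (n - d).factorial * n ^ d ≤ (n - d).factorial * (2 * (n - d + 1)) ^ d :=
        Nat.mul_le_mul_left _ (Nat.pow_le_pow_left (by omega) d)
    _ = 2 ^ d * ((n - d).factorial * (n - d + 1) ^ d) := by rw [Nat.mul_pow]; ring
    _ ≤ 2 ^ d * n.factorial := Nat.mul_le_mul_left _ hfac

section TruncatedPoisson

variable {n : ℕ} {l : ℝ}

lemma one_le_sum_pow_div_factorial (n : ℕ) (hl : 0 ≤ l) :
    1 ≤ ∑ d ∈ range (n + 1), l ^ d / d.factorial := by
  simpa using single_le_sum (f := fun d => l ^ d / (d.factorial : ℝ))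
    (fun d _ => by positivity) (mem_range.2 n.succ_pos)

lemma cConst_pos (hl : 0 ≤ l) : 0 < cConst n l :=
  div_pos (Real.exp_pos _) (one_pos.trans_le (one_le_sum_pow_div_factorial n hl))

lemma PD_nonneg (hl : 0 ≤ l) (d : ℕ) : 0 ≤ PD n l d := by
  have := cConst_pos (n := n) hl
  unfold PD
  positivity

lemma sum_PD (hl : 0 ≤ l) : ∑ d ∈ range (n + 1), PD n l d = 1 := by
  have hS := one_le_sum_pow_div_factorial n hl
  simp only [PD, cConst, ← sum_mul, ← mul_sum, Real.exp_neg]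
  field_simp

lemma PD_le_one (hl : 0 ≤ l) {d : ℕ} (hd : d ≤ n) : PD n l d ≤ 1 :=
  sum_PD hl ▸ single_le_sum (fun i _ => PD_nonneg hl i) (mem_range.2 (Nat.lt_succ_of_le hd))

lemma succ_mul_PD_succ (d : ℕ) : (d + 1 : ℝ) * PD n l (d + 1) = l * PD n l d := by
  simp only [PD, Nat.factorial_succ, pow_succ, Nat.cast_mul, Nat.cast_succ]
  field_simp

lemma sum_range_succ_mul_PD (K : ℕ) :
    ∑ d ∈ range (K + 1), (d : ℝ) * PD n l d = l * ∑ d ∈ range K, PD n l d := by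
  rw [sum_range_succ', mul_sum]
  simp only [Nat.cast_succ, succ_mul_PD_succ, Nat.cast_zero, zero_mul, add_zero]

lemma sum_mul_PD_le (hl : 0 ≤ l) : ∑ d ∈ range (n + 1), (d : ℝ) * PD n l d ≤ l := by
  rw [sum_range_succ_mul_PD]
  refine mul_le_of_le_one_right hl ?_
  rw [← sum_PD (n := n) hl]
  exact sum_le_sum_of_subset_of_nonneg (range_subset_range.2 n.le_succ)
    fun i _ _ => PD_nonneg hl i

lemma sum_Ico_PD_le (hl : 0 ≤ l) {M : ℕ} (hM : 0 < M) :
    ∑ d ∈ Ico M (n + 1), PD n l d ≤ l / M := by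
  rw [le_div_iff₀ (by exact_mod_cast hM), sum_mul]
  calc ∑ d ∈ Ico M (n + 1), PD n l d * M
      ≤ ∑ d ∈ Ico M (n + 1), (d : ℝ) * PD n l d := by
        refine sum_le_sum fun d hd => ?_
        rw [mul_comm]
        exact mul_le_mul_of_nonneg_right (by exact_mod_cast (mem_Ico.1 hd).1) (PD_nonneg hl d)
    _ ≤ ∑ d ∈ range (n + 1), (d : ℝ) * PD n l d :=
        sum_le_sum_of_subset_of_nonneg (fun d hd => mem_range.2 (mem_Ico.1 hd).2)
          fun d _ _ => mul_nonneg d.cast_nonneg (PD_nonneg hl d)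
    _ ≤ l := sum_mul_PD_le hl

lemma one_sub_div_le_sum_range_PD (hl : 0 ≤ l) {M : ℕ} (hM : 0 < M) (hMn : M ≤ n + 1) :
    1 - l / M ≤ ∑ d ∈ range M, PD n l d := by
  have hsplit := sum_range_add_sum_Ico (fun d => PD n l d) hMn
  rw [sum_PD hl] at hsplit
  linarith [sum_Ico_PD_le (n := n) hl hM]

lemma Pw_pos (hl : 0 < l) (d : ℕ) : 0 < Pw n l d := by
  have := cConst_pos (n := n) hl.le
  unfold Pw
  positivity

lemma Pw_le_PD (hl : 0 ≤ l) {d : ℕ} (hd : d ≤ n) : Pw n l d ≤ PD n l d := by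
  have hfac : ((n - d).factorial : ℝ) / n.factorial ≤ 1 / d.factorial := by
    rw [div_le_div_iff₀ (by positivity) (by positivity), one_mul, mul_comm]
    exact_mod_cast Nat.le_of_dvd n.factorial_pos (Nat.factorial_mul_factorial_dvd_factorial hd)
  have := cConst_pos (n := n) hl
  calc Pw n l d = cConst n l * ((n - d).factorial / n.factorial) * (l ^ d * Real.exp (-l)) := by
        unfold Pw; ring
    _ ≤ cConst n l * (1 / d.factorial) * (l ^ d * Real.exp (-l)) := by gcongr
    _ = PD n l d := by unfold PD; ring

lemma Pw_le_pow (hl : 0 ≤ l) {d : ℕ} (hd : d ≤ n / 2) : Pw n l d ≤ (2 * l / n) ^ d := by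
  have hS := one_le_sum_pow_div_factorial n hl
  have hfac : ((n - d).factorial : ℝ) / n.factorial ≤ (2 / n) ^ d := by
    rcases n.eq_zero_or_pos with rfl | hn
    · simp_all
    rw [div_pow, div_le_div_iff₀ (by positivity) (by positivity)]
    exact_mod_cast Nat.factorial_sub_mul_pow_le hd
  calc Pw n l d = ((n - d).factorial / n.factorial) * l ^ d /
        ∑ e ∈ range (n + 1), l ^ e / e.factorial := by
        simp only [Pw, cConst, Real.exp_neg]
        field_simp
    _ ≤ ((n - d).factorial / n.factorial) * l ^ d := div_le_self (by positivity) hS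
    _ ≤ (2 / n) ^ d * l ^ d := by gcongr
    _ = (2 * l / n) ^ d := by rw [← mul_pow, div_mul_eq_mul_div]

lemma neg_logb_Pw_nonneg (hl : 0 < l) {d : ℕ} (hd : d ≤ n) : 0 ≤ -Real.logb 2 (Pw n l d) :=
  neg_nonneg.2 <| Real.logb_nonpos one_lt_two (Pw_pos hl d).le
    ((Pw_le_PD hl.le hd).trans (PD_le_one hl.le hd))

lemma mul_logb_le_neg_logb_Pw (hl : 0 < l) {d : ℕ} (hd : d ≤ n / 2) :
    d * Real.logb 2 (n / (2 * l)) ≤ -Real.logb 2 (Pw n l d) := by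
  have := Real.logb_le_logb_of_le (b := 2) one_lt_two (Pw_pos hl d) (Pw_le_pow hl.le hd)
  rw [Real.logb_pow, ← inv_div, Real.logb_inv] at this
  linarith

lemma mul_sum_range_PD_le_pgtEntropy (hl : 0 < l) :
    Real.logb 2 (n / (2 * l)) * (l * ∑ d ∈ range (n / 2), PD n l d) ≤ pgtEntropy n l := by
  have hM : n / 2 + 1 ≤ n + 1 := by omega
  calc Real.logb 2 (n / (2 * l)) * (l * ∑ d ∈ range (n / 2), PD n l d)
      = ∑ d ∈ range (n / 2 + 1), PD n l d * (d * Real.logb 2 (n / (2 * l))) := by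
        rw [← sum_range_succ_mul_PD, mul_sum]
        exact sum_congr rfl fun _ _ => by ring
    _ ≤ ∑ d ∈ range (n / 2 + 1), PD n l d * -Real.logb 2 (Pw n l d) :=
        sum_le_sum fun d hd => mul_le_mul_of_nonneg_left
          (mul_logb_le_neg_logb_Pw hl (Nat.lt_succ_iff.1 (mem_range.1 hd))) (PD_nonneg hl.le d)
    _ ≤ ∑ d ∈ range (n + 1), PD n l d * -Real.logb 2 (Pw n l d) :=
        sum_le_sum_of_subset_of_nonneg (range_subset_range.2 hM) fun d hd _ =>
          mul_nonneg (PD_nonneg hl.le d)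
            (neg_logb_Pw_nonneg hl (Nat.lt_succ_iff.1 (mem_range.1 hd)))
    _ = pgtEntropy n l := by simp only [pgtEntropy, mul_neg, sum_neg_distrib]

theorem pgtEntropy_ge (hl : 0 < l) (hn : 2 ≤ n) (hln : 2 * l ≤ n) :
    (1 - (4 * l / n + 1 / Real.logb 2 (n / l))) * l * Real.logb 2 (n / l) ≤ pgtEntropy n l := by
  set L := Real.logb 2 (n / l)
  have hnR : (0 : ℝ) < n := by positivity
  have hL : Real.logb 2 (n / (2 * l)) = L - 1 := by
    rw [show (n : ℝ) / (2 * l) = n / l / 2 by ring, Real.logb_div (by positivity) two_ne_zero,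
      Real.logb_self_eq_one one_lt_two]
  have hL1 : 1 ≤ L := by
    have := Real.logb_nonneg (b := 2) one_lt_two ((one_le_div (by positivity)).2 hln)
    linarith
  have hM : (n : ℝ) / 4 ≤ (n / 2 : ℕ) := by
    have : n ≤ 4 * (n / 2) := by omega
    have : (n : ℝ) ≤ 4 * (n / 2 : ℕ) := by exact_mod_cast this
    linarith
  have hMarkov : 1 - 4 * l / n ≤ ∑ d ∈ range (n / 2), PD n l d := by
    refine le_trans ?_ (one_sub_div_le_sum_range_PD hl.le (by omega) (by omega))
    gcongr 1 - ?_
    rw [div_le_div_iff₀ (by linarith) hnR]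
    nlinarith
  have hmain := mul_sum_range_PD_le_pgtEntropy (n := n) hl
  rw [hL] at hmain
  have hkey : (1 - (4 * l / n + 1 / L)) * l * L ≤ (L - 1) * (l * (1 - 4 * l / n)) := by
    have : (1 - (4 * l / n + 1 / L)) * l * L = (L - 1) * l - 4 * l / n * l * L := by
      field_simp; ring
    rw [this]
    nlinarith [div_nonneg (mul_nonneg (by norm_num : (0 : ℝ) ≤ 4) hl.le) hnR.le]
  refine hkey.trans (le_trans ?_ hmain)
  gcongr

end TruncatedPoisson

lemma tendsto_logb_div_atTop {lam : ℕ → ℝ} (hpos : ∀ n, 0 < lam n)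
    (hlamo : Tendsto (fun n => lam n / n) atTop (nhds 0)) :
    Tendsto (fun n : ℕ => Real.logb 2 (n / lam n)) atTop atTop := by
  have h0 : Tendsto (fun n => lam n / n) atTop (nhdsWithin 0 (Set.Ioi 0)) :=
    tendsto_nhdsWithin_of_tendsto_nhds_of_eventually_within _ hlamo <|
      (eventually_ge_atTop 1).mono fun n hn => div_pos (hpos n) (by exact_mod_cast hn)
  refine (Real.tendsto_logb_atTop one_lt_two).comp ?_
  simpa only [Pi.inv_def, inv_div] using h0.inv_tendsto_nhdsGT_zero

theorem stmt7 (lam : ℕ → ℝ) (hpos : ∀ n, 0 < lam n)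
    (hlamo : Tendsto (fun n => lam n / n) atTop (nhds 0))
    (H : ℕ → ℝ)
    (hH : ∀ n, H n = -∑ d ∈ Finset.range (n + 1),
        PD n (lam n) d * Real.logb 2 (Pw n (lam n) d)) :
    (∃ δ : ℕ → ℝ, Tendsto δ atTop (nhds 0) ∧
      ∀ᶠ n in atTop,
        (1 - δ n) * lam n * Real.logb 2 ((n : ℝ) / lam n)
            - Real.logb 2 (Real.exp 1) * lam n ^ 4 / (n : ℝ) ^ 2 ≤ H n) ∧
    (Tendsto (fun n => lam n / ((n : ℝ) ^ 2 * Real.logb 2 n) ^ ((1 : ℝ) / 3))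
        atTop (nhds 0) →
      ∃ δ : ℕ → ℝ, Tendsto δ atTop (nhds 0) ∧
        ∀ᶠ n in atTop, (1 - δ n) * lam n * Real.logb 2 ((n : ℝ) / lam n) ≤ H n) := by
  set δ : ℕ → ℝ := fun n => 4 * lam n / n + 1 / Real.logb 2 (n / lam n)
  have hδ : Tendsto δ atTop (nhds 0) := by
    simpa only [δ, mul_div_assoc, mul_zero, one_div, add_zero, Pi.inv_apply] using
      (hlamo.const_mul 4).add (tendsto_logb_div_atTop hpos hlamo).inv_tendsto_atTop
  have hbound : ∀ᶠ n in atTop, (1 - δ n) * lam n * Real.logb 2 (n / lam n) ≤ H n := by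
    filter_upwards [eventually_ge_atTop 2, hlamo.eventually_lt_const one_half_pos] with n hn hln
    rw [hH n]
    refine pgtEntropy_ge (hpos n) hn ?_
    rw [div_lt_iff₀ (by positivity)] at hln
    linarith
  have hlog_e : 0 ≤ Real.logb 2 (Real.exp 1) :=
    Real.logb_nonneg one_lt_two (Real.one_le_exp zero_le_one)
  refine ⟨⟨δ, hδ, hbound.mono fun n hn => ?_⟩, fun _ => ⟨δ, hδ, hbound⟩⟩
  have : 0 ≤ Real.logb 2 (Real.exp 1) * lam n ^ 4 / (n : ℝ) ^ 2 := by positivity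
  linarith
end

section
/- Let λ : ℕ → (0,∞) satisfy λ(n) = o(n) and lim_{n→∞} λ(n) = ∞, and let λ̄(n) = λ(n)·(1 − c(n,λ(n))·(λ(n)^n/n!)·e^{−λ(n)}) be the mean of the right-truncated Poisson distribution with parameters λ(n) and n. Set s₀ = log(n/λ̄(n)), s = ⌈s₀⌉, and k_i = ⌈(n/λ̄(n))^{(s₀−i)/s₀}⌉ for 1 ≤ i ≤ s−1. Then the upper bound on the expected number of tests of the s-stage splitting algorithm satisfies ⌈n/k₁⌉ + Σ_{i=2}^{s−1} λ̄(n)·k_{i−1}/k_i + λ̄(n)·k_{s−1} + s − 2 ≤ (e/log₂ e)·λ̄(n)·log₂(n/λ̄(n))·(1+o(1)); i.e., there exists δ(n) → 0 such that eventually the left-hand side is at most (1+δ(n))·(e/log₂ e)·λ̄(n)·log₂(n/λ̄(n)). -/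
open Filter Finset

/-- The mean `λ̄ = λ·(1 − c(n,λ)·(λ^n/n!)·e^{−λ})` of the right-truncated Poisson
distribution with parameters `lam` and `n`. -/
noncomputable def lamBar (n : ℕ) (lam : ℝ) : ℝ :=
  lam * (1 - cConst n lam * (lam ^ n / n.factorial) * Real.exp (-lam))

/-!
Write `x = log (n / λ̄)`, so that `k_i = ⌈e^{x - i}⌉`. Every stage then costs about `e·λ̄` tests:
the first stage `n / k₁ ≤ e·λ̄`, each middle stage `λ̄·k_{i-1}/k_i ≤ e·λ̄ + λ̄·e^{i-x}` (the last
summands form a geometric series), and the last stage `λ̄·k_{s-1} ≤ (e + 1)·λ̄`. With `s ≤ x + 1`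
stages the total is at most `e·λ̄·x + 6·λ̄ + x`, and `e·λ̄·x = (e / log₂ e)·λ̄·log₂ (n / λ̄)`.
The truncated mass at `n` is at most `λ/n`, so `λ(1 - λ/n) ≤ λ̄ ≤ λ`; hence both `λ̄` and `x`
tend to infinity and the error `6·λ̄ + x` is `o(λ̄·x)`.
-/

open Real

lemma cConst_mul_exp_neg (n : ℕ) (L : ℝ) :
    cConst n L * (L ^ n / n.factorial) * exp (-L)
      = (L ^ n / n.factorial) / ∑ d ∈ range (n + 1), L ^ d / d.factorial := by
  rw [cConst, mul_right_comm, div_mul_eq_mul_div, ← exp_add, add_neg_cancel, exp_zero,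
    one_div_mul_eq_div]

lemma pow_div_factorial_div_sum_le {L : ℝ} (hL : 0 ≤ L) {n : ℕ} (hn : 1 ≤ n) :
    (L ^ n / n.factorial) / ∑ d ∈ range (n + 1), L ^ d / d.factorial ≤ L / n := by
  obtain ⟨m, rfl⟩ : ∃ m, n = m + 1 := ⟨n - 1, by omega⟩
  have hsum_pos : 0 < ∑ d ∈ range (m + 2), L ^ d / d.factorial :=
    sum_pos' (fun d _ => by positivity) ⟨0, by simp⟩
  have hstep : L ^ (m + 1) / (m + 1).factorial = L / (m + 1 : ℕ) * (L ^ m / m.factorial) := by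
    rw [Nat.factorial_succ, pow_succ]; push_cast; field_simp
  rw [div_le_iff₀ hsum_pos, hstep]
  gcongr
  exact single_le_sum (f := fun d => L ^ d / (d.factorial : ℝ)) (fun d _ => by positivity)
    (mem_range.mpr (by omega : m < m + 2))

lemma lamBar_eq (n : ℕ) (L : ℝ) :
    lamBar n L = L * (1 - (L ^ n / n.factorial) / ∑ d ∈ range (n + 1), L ^ d / d.factorial) := by
  rw [lamBar, cConst_mul_exp_neg]

lemma lamBar_le {L : ℝ} (hL : 0 ≤ L) (n : ℕ) : lamBar n L ≤ L := by
  rw [lamBar_eq]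
  have : 0 ≤ (L ^ n / n.factorial) / ∑ d ∈ range (n + 1), L ^ d / d.factorial := by
    positivity
  nlinarith

lemma mul_one_sub_div_le_lamBar {L : ℝ} (hL : 0 ≤ L) {n : ℕ} (hn : 1 ≤ n) :
    L * (1 - L / n) ≤ lamBar n L := by
  rw [lamBar_eq]
  have := pow_div_factorial_div_sum_le hL hn
  gcongr

section Asymptotics

variable {lam : ℕ → ℝ}

lemma eventually_half_le_lamBar (hlamo : Tendsto (fun n => lam n / n) atTop (nhds 0))
    (hlaminf : Tendsto lam atTop atTop) : ∀ᶠ n in atTop, lam n / 2 ≤ lamBar n (lam n) := by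
  filter_upwards [hlamo.eventually (gt_mem_nhds one_half_pos), hlaminf.eventually_ge_atTop 0,
    eventually_ge_atTop 1] with n hsmall hnonneg hn
  have := mul_one_sub_div_le_lamBar hnonneg hn
  nlinarith

lemma tendsto_lamBar_atTop (hlamo : Tendsto (fun n => lam n / n) atTop (nhds 0))
    (hlaminf : Tendsto lam atTop atTop) : Tendsto (fun n => lamBar n (lam n)) atTop atTop :=
  tendsto_atTop_mono' atTop (eventually_half_le_lamBar hlamo hlaminf)
    (hlaminf.atTop_div_const two_pos)

lemma tendsto_div_lamBar_atTop (hlamo : Tendsto (fun n => lam n / n) atTop (nhds 0))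
    (hlaminf : Tendsto lam atTop atTop) :
    Tendsto (fun n : ℕ => n / lamBar n (lam n)) atTop atTop := by
  have hlam_pos : ∀ᶠ n in atTop, 0 < lam n := hlaminf.eventually_gt_atTop 0
  have hratio_pos : ∀ᶠ n : ℕ in atTop, lam n / n ∈ Set.Ioi 0 := by
    filter_upwards [hlam_pos, eventually_gt_atTop 0] with n hl hn
    exact div_pos hl (Nat.cast_pos.mpr hn)
  have hinv : Tendsto (fun n : ℕ => n / lam n) atTop atTop := by
    simpa [Pi.inv_def, inv_div] using
      (tendsto_nhdsWithin_of_tendsto_nhds_of_eventually_within _ hlamo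
        hratio_pos).inv_tendsto_nhdsGT_zero
  refine tendsto_atTop_mono' atTop ?_ hinv
  filter_upwards [(tendsto_lamBar_atTop hlamo hlaminf).eventually_gt_atTop 0, hlam_pos]
    with n hB hl
  exact div_le_div_of_nonneg_left n.cast_nonneg hB (lamBar_le hl.le n)

end Asymptotics

lemma ceil_mul_exp_div_le {B x K : ℝ} (hB : 0 < B) (hK : exp (x - 1) ≤ K) :
    (⌈B * exp x / K⌉₊ : ℝ) ≤ exp 1 * B + 1 := by
  have hdiv : B * exp x / K ≤ exp 1 * B := calc
    B * exp x / K ≤ B * exp x / exp (x - 1) := by gcongr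
    _ = exp 1 * B := by rw [exp_sub]; field_simp
  have hK_pos : 0 < K := (exp_pos _).trans_le hK
  linarith [Nat.ceil_lt_add_one (by positivity : 0 ≤ B * exp x / K)]

lemma mul_div_le_of_le_exp {B a b y : ℝ} (hB : 0 ≤ B) (ha : a ≤ exp (y + 1) + 1)
    (hb : exp y ≤ b) : B * a / b ≤ B * exp 1 + B * exp (-y) := calc
  B * a / b ≤ B * (exp (y + 1) + 1) / exp y :=
    div_le_div₀ (mul_nonneg hB (by positivity)) (mul_le_mul_of_nonneg_left ha hB) (exp_pos y) hb
  _ = B * exp 1 + B * exp (-y) := by rw [exp_add, exp_neg]; field_simp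

lemma exp_sub_le_half_pow {x : ℝ} {s i : ℕ} (hx : (s : ℝ) - 1 ≤ x) (hi : i < s) :
    exp (i - x) ≤ (1 / 2) ^ (s - 1 - i) := calc
  exp (i - x) ≤ exp ((s - 1 - i : ℕ) * (-1)) := by
    gcongr
    rw [Nat.cast_sub (by omega), Nat.cast_sub (by omega)]
    push_cast
    linarith
  _ = exp (-1) ^ (s - 1 - i) := exp_nat_mul _ _
  _ ≤ (1 / 2) ^ (s - 1 - i) := by
    gcongr
    rw [exp_neg, one_div]
    exact inv_anti₀ two_pos exp_one_gt_two.le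

lemma sum_Icc_exp_sub_le_two {x : ℝ} {s : ℕ} (hx : (s : ℝ) - 1 ≤ x) :
    ∑ i ∈ Icc 2 (s - 1), exp (i - x) ≤ 2 := calc
  ∑ i ∈ Icc 2 (s - 1), exp (i - x) ≤ ∑ i ∈ range s, exp (i - x) :=
    sum_le_sum_of_subset_of_nonneg (fun i hi => by simp at hi ⊢; omega)
      (fun _ _ _ => (exp_pos _).le)
  _ ≤ ∑ i ∈ range s, (1 / 2 : ℝ) ^ (s - 1 - i) :=
    sum_le_sum fun i hi => exp_sub_le_half_pow hx (mem_range.mp hi)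
  _ = ∑ i ∈ range s, (1 / 2 : ℝ) ^ i := sum_range_reflect (fun i => (1 / 2 : ℝ) ^ i) s
  _ ≤ 2 := sum_geometric_two_le s

theorem splitting_tests_le {B x N : ℝ} {s : ℕ} {k : ℕ → ℕ} (hB : 0 < B) (hx : 1 < x)
    (hN : exp x = N / B) (hs : s = ⌈x⌉₊)
    (hk : ∀ i, 1 ≤ i → i ≤ s - 1 → k i = ⌈exp (x - i)⌉₊) :
    (⌈N / k 1⌉₊ : ℝ) + ∑ i ∈ Icc 2 (s - 1), B * k (i - 1) / k i + B * k (s - 1) + s - 2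
      ≤ exp 1 * B * x + 6 * B + x := by
  have hs_lo : x ≤ s := hs ▸ Nat.le_ceil x
  have hs_hi : (s : ℝ) < x + 1 := hs ▸ Nat.ceil_lt_add_one (by linarith)
  have hs_two : 2 ≤ s := Nat.one_lt_cast.mp (hx.trans_le hs_lo)
  have hk_lo : ∀ i, 1 ≤ i → i ≤ s - 1 → exp (x - i) ≤ k i := fun i h1 h2 =>
    hk i h1 h2 ▸ Nat.le_ceil _
  have hk_hi : ∀ i, 1 ≤ i → i ≤ s - 1 → (k i : ℝ) ≤ exp (x - i) + 1 := fun i h1 h2 =>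
    hk i h1 h2 ▸ (Nat.ceil_lt_add_one (exp_pos _).le).le
  have hfirst : (⌈N / k 1⌉₊ : ℝ) ≤ exp 1 * B + 1 := by
    rw [show N = B * exp x by rw [hN]; field_simp]
    exact ceil_mul_exp_div_le hB (by simpa using hk_lo 1 le_rfl (by omega))
  have hratio : ∀ i ∈ Icc 2 (s - 1), B * k (i - 1) / k i ≤ B * exp 1 + B * exp (i - x) := by
    intro i hi
    obtain ⟨hi_lo, hi_hi⟩ := mem_Icc.mp hi
    have hprev : (k (i - 1) : ℝ) ≤ exp (x - i + 1) + 1 := by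
      convert hk_hi (i - 1) (by omega) (by omega) using 3
      rw [Nat.cast_sub (by omega : 1 ≤ i)]
      ring
    simpa using mul_div_le_of_le_exp hB.le hprev (hk_lo i (by omega) hi_hi)
  have hmiddle : ∑ i ∈ Icc 2 (s - 1), B * k (i - 1) / k i ≤ (s - 2) * (B * exp 1) + B * 2 := calc
    _ ≤ ∑ i ∈ Icc 2 (s - 1), (B * exp 1 + B * exp (i - x)) := sum_le_sum hratio
    _ = (s - 2) * (B * exp 1) + B * ∑ i ∈ Icc 2 (s - 1), exp (i - x) := by
      rw [sum_add_distrib, sum_const, nsmul_eq_mul, mul_sum, Nat.card_Icc,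
        show s - 1 + 1 - 2 = s - 2 by omega, Nat.cast_sub hs_two, Nat.cast_two]
    _ ≤ (s - 2) * (B * exp 1) + B * 2 := by
      gcongr
      exact sum_Icc_exp_sub_le_two (x := x) (s := s) (by linarith)
  have hlast : B * k (s - 1) ≤ B * (exp 1 + 1) := by
    have := hk_hi (s - 1) (by omega) le_rfl
    rw [Nat.cast_sub (by omega), Nat.cast_one] at this
    gcongr
    linarith [exp_le_exp.mpr (show x - (s - 1) ≤ 1 by linarith)]
  have hstages := mul_le_mul_of_nonneg_left hs_hi.le (mul_pos (exp_pos 1) hB).le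
  have he := mul_le_mul_of_nonneg_right exp_one_lt_three.le hB.le
  linarith

lemma rpow_log_sub_div_log {r : ℝ} (hr : 0 < r) (hlog : log r ≠ 0) (t : ℝ) :
    r ^ ((log r - t) / log r) = exp (log r - t) := by
  rw [rpow_def_of_pos hr, mul_div_cancel₀ _ hlog]

lemma logb_div_logb_exp_one {b : ℝ} (hb : log b ≠ 0) (y : ℝ) :
    logb b y / logb b (exp 1) = log y := by
  rw [logb, logb, log_exp, div_div_div_cancel_right₀ hb, div_one]

theorem stmt8_general (lam : ℕ → ℝ)
    (hlamo : Tendsto (fun n => lam n / n) atTop (nhds 0))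
    (hlaminf : Tendsto lam atTop atTop)
    (s0 : ℕ → ℝ) (hs0 : ∀ n, s0 n = Real.log ((n : ℝ) / lamBar n (lam n)))
    (s : ℕ → ℕ) (hs : ∀ n, s n = ⌈s0 n⌉₊)
    (k : ℕ → ℕ → ℕ)
    (hk : ∀ n i, 1 ≤ i → i ≤ s n - 1 →
      k n i = ⌈((n : ℝ) / lamBar n (lam n)) ^ ((s0 n - i) / s0 n)⌉₊) :
    ∃ δ : ℕ → ℝ, Tendsto δ atTop (nhds 0) ∧
      ∀ᶠ n : ℕ in atTop,
        (⌈(n : ℝ) / (k n 1 : ℝ)⌉₊ : ℝ)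
            + (∑ i ∈ Finset.Icc 2 (s n - 1),
                lamBar n (lam n) * (k n (i - 1) : ℝ) / (k n i : ℝ))
            + lamBar n (lam n) * (k n (s n - 1) : ℝ) + (s n : ℝ) - 2
          ≤ (1 + δ n) * (Real.exp 1 / Real.logb 2 (Real.exp 1)) * lamBar n (lam n)
              * Real.logb 2 ((n : ℝ) / lamBar n (lam n)) := by
  have hlamBar_top := tendsto_lamBar_atTop hlamo hlaminf
  have hs0_top : Tendsto s0 atTop atTop :=
    (tendsto_log_atTop.comp (tendsto_div_lamBar_atTop hlamo hlaminf)).congr fun n => (hs0 n).symm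
  refine ⟨fun n => 6 / (exp 1 * s0 n) + 1 / (exp 1 * lamBar n (lam n)), ?_, ?_⟩
  · simpa only [add_zero] using
      (tendsto_const_nhds (x := (6 : ℝ)).div_atTop (hs0_top.const_mul_atTop (exp_pos 1))).add
        (tendsto_const_nhds (x := (1 : ℝ)).div_atTop (hlamBar_top.const_mul_atTop (exp_pos 1)))
  filter_upwards [hlamBar_top.eventually_gt_atTop 0, hs0_top.eventually_gt_atTop 1,
    eventually_gt_atTop 0] with n hB_pos hs0_gt hn
  have hr : 0 < (n : ℝ) / lamBar n (lam n) := div_pos (Nat.cast_pos.mpr hn) hB_pos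
  have hlog : log ((n : ℝ) / lamBar n (lam n)) ≠ 0 := by rw [← hs0]; linarith
  refine (splitting_tests_le hB_pos hs0_gt (by rw [hs0, exp_log hr]) (hs n)
    fun i h1 h2 => by rw [hk n i h1 h2, hs0, rpow_log_sub_div_log hr hlog]).trans_eq ?_
  rw [show ∀ a c d L M : ℝ, a * (c / L) * d * M = a * c * d * (M / L) from
      fun _ _ _ _ _ => by ring, logb_div_logb_exp_one (log_pos one_lt_two).ne', ← hs0]
  field_simp
  ring

theorem stmt8 (lam : ℕ → ℝ) (hpos : ∀ n, 0 < lam n)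
    (hlamo : Tendsto (fun n => lam n / n) atTop (nhds 0))
    (hlaminf : Tendsto lam atTop atTop)
    (s0 : ℕ → ℝ) (hs0 : ∀ n, s0 n = Real.log ((n : ℝ) / lamBar n (lam n)))
    (s : ℕ → ℕ) (hs : ∀ n, s n = ⌈s0 n⌉₊)
    (k : ℕ → ℕ → ℕ)
    (hk : ∀ n i, 1 ≤ i → i ≤ s n - 1 →
      k n i = ⌈((n : ℝ) / lamBar n (lam n)) ^ ((s0 n - i) / s0 n)⌉₊) :
    ∃ δ : ℕ → ℝ, Tendsto δ atTop (nhds 0) ∧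
      ∀ᶠ n : ℕ in atTop,
        (⌈(n : ℝ) / (k n 1 : ℝ)⌉₊ : ℝ)
            + (∑ i ∈ Finset.Icc 2 (s n - 1),
                lamBar n (lam n) * (k n (i - 1) : ℝ) / (k n i : ℝ))
            + lamBar n (lam n) * (k n (s n - 1) : ℝ) + (s n : ℝ) - 2
          ≤ (1 + δ n) * (Real.exp 1 / Real.logb 2 (Real.exp 1)) * lamBar n (lam n)
              * Real.logb 2 ((n : ℝ) / lamBar n (lam n)) :=
  stmt8_general lam hlamo hlaminf s0 hs0 s hs k hk
end

section
/- Let λ : ℕ → (0,∞) satisfy λ(n) = o(n) and lim_{n→∞} λ(n) = ∞, let ε > 0 be fixed, and for each n let D_n follow the right-truncated Poisson distribution with parameters λ(n) and n. Then, with Δ(n) = ⌈λ(n)^{1+ε}⌉ − 1, one has lim_{n→∞} P(D_n > Δ(n)) = 0. -/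
/-!
Write the truncated Poisson probabilities as `w d / ∑_{d ≤ n} w d` with `w d = λ^d / d!`.
From `j = ⌈2λ⌉` on, consecutive weights shrink by a factor at least `2`, so the tail
`∑_{d ≥ t} w d` is at most `2 w t ≤ 2 · 2^{-(t - j)} w j`, while the normalizing sum is at least
its single term `w j` once `j ≤ n`, which `λ = o(n)` guarantees. For `t = ⌈λ^{1+ε}⌉` the gap
`t - j ≥ λ (λ^ε - 2) - 1` tends to infinity.
-/

open Filter Finset

noncomputable def poissonWeight (l : ℝ) (d : ℕ) : ℝ := l ^ d / d.factorial

section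

variable {l : ℝ}

lemma poissonWeight_nonneg (hl : 0 ≤ l) (d : ℕ) : 0 ≤ poissonWeight l d := by
  unfold poissonWeight; positivity

lemma poissonWeight_pos (hl : 0 < l) (d : ℕ) : 0 < poissonWeight l d := by
  unfold poissonWeight; positivity

lemma poissonWeight_succ (l : ℝ) (d : ℕ) :
    poissonWeight l (d + 1) = l / (d + 1) * poissonWeight l d := by
  unfold poissonWeight
  rw [Nat.factorial_succ, pow_succ]
  push_cast
  field_simp

lemma poissonWeight_le_pow_mul {r : ℝ} {t : ℕ} (hl : 0 ≤ l) (hr : 0 ≤ r) (hlr : l ≤ r * (t + 1))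
    {k : ℕ} (htk : t ≤ k) : poissonWeight l k ≤ r ^ (k - t) * poissonWeight l t := by
  induction k, htk using Nat.le_induction with
  | base => simp
  | succ k htk ih =>
    have hratio : l / (k + 1) ≤ r := by
      rw [div_le_iff₀ (by positivity)]
      have : (t : ℝ) ≤ k := by exact_mod_cast htk
      nlinarith
    calc poissonWeight l (k + 1) = l / (k + 1) * poissonWeight l k := poissonWeight_succ l k
      _ ≤ r * (r ^ (k - t) * poissonWeight l t) :=
        mul_le_mul hratio ih (poissonWeight_nonneg hl k) hr
      _ = r ^ (k + 1 - t) * poissonWeight l t := by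
        rw [show k + 1 - t = k - t + 1 by omega, pow_succ]; ring

lemma poissonWeight_sum_Icc_le {t : ℕ} (hl : 0 ≤ l) (ht : 2 * l ≤ t + 1) (n : ℕ) :
    ∑ d ∈ Icc t n, poissonWeight l d ≤ 2 * poissonWeight l t := by
  have hgeom : ∑ d ∈ Icc t n, (1 / 2 : ℝ) ^ (d - t) ≤ 2 := by
    rw [← Ico_add_one_right_eq_Icc, sum_Ico_eq_sum_range]
    simpa only [Nat.add_sub_cancel_left] using sum_geometric_two_le (n + 1 - t)
  calc ∑ d ∈ Icc t n, poissonWeight l d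
      ≤ ∑ d ∈ Icc t n, (1 / 2 : ℝ) ^ (d - t) * poissonWeight l t :=
        sum_le_sum fun d hd =>
          poissonWeight_le_pow_mul hl (by norm_num) (by linarith) (mem_Icc.1 hd).1
    _ = (∑ d ∈ Icc t n, (1 / 2 : ℝ) ^ (d - t)) * poissonWeight l t := (sum_mul ..).symm
    _ ≤ 2 * poissonWeight l t := mul_le_mul_of_nonneg_right hgeom (poissonWeight_nonneg hl t)

end

lemma truncPoisson_tail_le {l : ℝ} {j t n : ℕ} (hl : 0 < l) (hj : 2 * l ≤ j + 1) (hjt : j ≤ t)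
    (hjn : j ≤ n) :
    (∑ d ∈ Icc t n, poissonWeight l d) / ∑ d ∈ range (n + 1), poissonWeight l d
      ≤ 2 * (1 / 2) ^ (t - j) := by
  have hwj := poissonWeight_pos hl j
  have htj : 2 * l ≤ t + 1 := by linarith [show (j : ℝ) ≤ t by exact_mod_cast hjt]
  calc (∑ d ∈ Icc t n, poissonWeight l d) / ∑ d ∈ range (n + 1), poissonWeight l d
      ≤ 2 * poissonWeight l t / poissonWeight l j :=
        div_le_div₀ (by linarith [poissonWeight_pos hl t]) (poissonWeight_sum_Icc_le hl.le htj n)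
          hwj (single_le_sum (fun d _ => poissonWeight_nonneg hl.le d) (mem_range.2 (by omega)))
    _ ≤ 2 * ((1 / 2) ^ (t - j) * poissonWeight l j) / poissonWeight l j := by
        gcongr
        exact poissonWeight_le_pow_mul hl.le (by norm_num) (by linarith) hjt
    _ = 2 * (1 / 2) ^ (t - j) := by field_simp

lemma cConst_mul_mul_exp_neg (n : ℕ) (l x : ℝ) :
    cConst n l * x * Real.exp (-l) = x / ∑ d ∈ range (n + 1), poissonWeight l d := by
  rw [mul_right_comm, cConst, div_mul_eq_mul_div, ← Real.exp_add, add_neg_cancel, Real.exp_zero,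
    one_div_mul_eq_div]
  rfl

lemma tendsto_ceil_rpow_sub_ceil_two_mul {ε : ℝ} (hε : 0 < ε) :
    Tendsto (fun x : ℝ => ⌈x ^ (1 + ε)⌉₊ - ⌈2 * x⌉₊) atTop atTop := by
  rw [← tendsto_natCast_atTop_iff (R := ℝ)]
  refine tendsto_atTop_mono' atTop ?_ (tendsto_atTop_add_const_right atTop (-1) tendsto_id)
  filter_upwards [eventually_ge_atTop 1, (tendsto_rpow_atTop hε).eventually_ge_atTop 3]
    with x hx1 hxε
  have hcast : (⌈x ^ (1 + ε)⌉₊ : ℝ) ≤ ((⌈x ^ (1 + ε)⌉₊ - ⌈2 * x⌉₊ : ℕ) : ℝ) + ⌈2 * x⌉₊ := by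
    exact_mod_cast (by omega : ⌈x ^ (1 + ε)⌉₊ ≤ ⌈x ^ (1 + ε)⌉₊ - ⌈2 * x⌉₊ + ⌈2 * x⌉₊)
  have hpow : x ^ (1 + ε) = x * x ^ ε := by
    rw [Real.rpow_add (by linarith), Real.rpow_one]
  have hupper := Nat.le_ceil (x ^ (1 + ε))
  have hlower := Nat.ceil_lt_add_one (show 0 ≤ 2 * x by linarith)
  simp only [id]
  nlinarith

theorem stmt10_general (lam : ℕ → ℝ)
    (hlamo : Tendsto (fun n => lam n / n) atTop (nhds 0))
    (hlaminf : Tendsto lam atTop atTop)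
    (ε : ℝ) (hε : 0 < ε)
    (Δ : ℕ → ℕ) (hΔ : ∀ n, Δ n = ⌈lam n ^ ((1 : ℝ) + ε)⌉₊ - 1) :
    Tendsto (fun n => ∑ d ∈ Finset.Icc (Δ n + 1) n,
        cConst n (lam n) * (lam n ^ d / d.factorial) * Real.exp (-(lam n)))
      atTop (nhds 0) := by
  simp_rw [← poissonWeight.eq_def, cConst_mul_mul_exp_neg, ← sum_div]
  have hgap : Tendsto (fun n => Δ n + 1 - ⌈2 * lam n⌉₊) atTop atTop :=
    tendsto_atTop_mono (fun n => by simp only [Function.comp_apply, hΔ n]; omega)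
      ((tendsto_ceil_rpow_sub_ceil_two_mul hε).comp hlaminf)
  have hbound :
      Tendsto (fun n => 2 * (1 / 2 : ℝ) ^ (Δ n + 1 - ⌈2 * lam n⌉₊)) atTop (nhds 0) := by
    simpa using ((tendsto_pow_atTop_nhds_zero_of_lt_one (r := (1 / 2 : ℝ)) (by norm_num)
      (by norm_num)).comp hgap).const_mul 2
  have hpos : ∀ᶠ n in atTop, 0 < lam n := hlaminf.eventually_gt_atTop 0
  have hjn : ∀ᶠ n : ℕ in atTop, ⌈2 * lam n⌉₊ ≤ n := by
    filter_upwards [hlamo.eventually_le_const (by norm_num : (0 : ℝ) < 1 / 2),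
      eventually_gt_atTop 0] with n hn hn0
    rw [div_le_iff₀ (by exact_mod_cast hn0)] at hn
    exact Nat.ceil_le.2 (by linarith)
  refine squeeze_zero' ?_ ?_ hbound
  · filter_upwards [hpos] with n hn
    exact div_nonneg (sum_nonneg fun d _ => poissonWeight_nonneg hn.le d)
      (sum_nonneg fun d _ => poissonWeight_nonneg hn.le d)
  · filter_upwards [hpos, hjn, hgap.eventually_ge_atTop 1] with n hn hjn hjt
    exact truncPoisson_tail_le hn (by linarith [Nat.le_ceil (2 * lam n)]) (by omega) hjn

theorem stmt10 (lam : ℕ → ℝ) (hpos : ∀ n, 0 < lam n)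
    (hlamo : Tendsto (fun n => lam n / n) atTop (nhds 0))
    (hlaminf : Tendsto lam atTop atTop)
    (ε : ℝ) (hε : 0 < ε)
    (Δ : ℕ → ℕ) (hΔ : ∀ n, Δ n = ⌈lam n ^ ((1 : ℝ) + ε)⌉₊ - 1) :
    Tendsto (fun n => ∑ d ∈ Finset.Icc (Δ n + 1) n,
        cConst n (lam n) * (lam n ^ d / d.factorial) * Real.exp (-(lam n)))
      atTop (nhds 0) :=
  stmt10_general lam hlamo hlaminf ε hε Δ hΔ
end

section
/- Let n ∈ ℕ with n ≥ 2, let λ > 0, and let c = e^{λ}/(Σ_{d=0}^{n} λ^d/d!). Then the right-truncated Poisson distribution with parameters λ and n satisfies Σ_{d=0}^{n} (d(d−1)/(n−d+1))·c·(λ^d/d!)·e^{−λ} < (λ²/n²)·(n + 2 + 4λ + λ²). -/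
/-!
Write `w d = λ ^ d / d!` and `S = ∑_{d ≤ n} w d`, so that `c e^{-λ} = 1 / S`. For `1 ≤ d ≤ n`,
`1 / (n - d + 1) ≤ 1 / n + d (d - 1) / n²`, and `(d (d - 1))² = d⁽⁴⁾ + 4 d⁽³⁾ + 2 d⁽²⁾` in falling
factorials. The truncated falling factorial moments are `∑_{d ≤ n} d⁽ʳ⁾ w d = λ ^ r ∑_{j ≤ n - r} w j`,
which is `< λ ^ r S` because the truncated sum misses the positive term `w n`.
-/

open Finset

theorem sum_range_descFactorial_mul_pow_div_factorial (lam : ℝ) (r N : ℕ) :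
    ∑ d ∈ range N, (d.descFactorial r : ℝ) * (lam ^ d / d.factorial)
      = lam ^ r * ∑ j ∈ range (N - r), lam ^ j / j.factorial := by
  rcases le_or_gt N r with hNr | hrN
  · rw [Nat.sub_eq_zero_of_le hNr, range_zero, sum_empty, mul_zero]
    refine sum_eq_zero fun d hd => ?_
    rw [Nat.descFactorial_eq_zero_iff_lt.mpr ((mem_range.mp hd).trans_le hNr)]
    simp
  · obtain ⟨k, rfl⟩ := Nat.exists_eq_add_of_lt hrN
    rw [show r + k + 1 - r = k + 1 by omega, show r + k + 1 = r + (k + 1) by omega,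
      sum_range_add, mul_sum]
    have hlow : ∑ d ∈ range r, (d.descFactorial r : ℝ) * (lam ^ d / d.factorial) = 0 :=
      sum_eq_zero fun d hd => by
        rw [Nat.descFactorial_eq_zero_iff_lt.mpr (mem_range.mp hd)]; simp
    rw [hlow, zero_add]
    refine sum_congr rfl fun j _ => ?_
    have hfac : (j.factorial : ℝ) * (r + j).descFactorial r = (r + j).factorial := by
      have := Nat.factorial_mul_descFactorial (Nat.le_add_right r j)
      rw [Nat.add_sub_cancel_left] at this
      exact_mod_cast this
    rw [← hfac, pow_add]
    have : ((r + j).descFactorial r : ℝ) ≠ 0 := by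
      exact_mod_cast (Nat.descFactorial_pos.mpr (by omega)).ne'
    field_simp

theorem sum_range_descFactorial_mul_pow_div_factorial_lt {lam : ℝ} (hlam : 0 < lam) {r N : ℕ}
    (hr : 0 < r) (hN : 0 < N) :
    ∑ d ∈ range N, (d.descFactorial r : ℝ) * (lam ^ d / d.factorial)
      < lam ^ r * ∑ j ∈ range N, lam ^ j / j.factorial := by
  rw [sum_range_descFactorial_mul_pow_div_factorial]
  refine mul_lt_mul_of_pos_left ?_ (by positivity)
  exact sum_lt_sum_of_subset (range_subset_range.mpr (Nat.sub_le N r))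
    (mem_range.mpr (Nat.sub_one_lt_of_lt hN)) (by simp; omega) (by positivity)
    fun _ _ _ => by positivity

theorem descFactorial_two_sq (d : ℕ) :
    d.descFactorial 2 ^ 2
      = d.descFactorial 4 + 4 * d.descFactorial 3 + 2 * d.descFactorial 2 := by
  rcases lt_or_ge d 4 with hd | hd
  · interval_cases d <;> rfl
  · obtain ⟨e, rfl⟩ := Nat.exists_eq_add_of_le' hd
    simp only [Nat.descFactorial_succ, Nat.descFactorial_zero]
    rw [show e + 4 - 3 = e + 1 by omega, show e + 4 - 2 = e + 2 by omega,
      show e + 4 - 1 = e + 3 by omega, show e + 4 - 0 = e + 4 by omega]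
    ring

theorem one_div_sub_add_one_le {d n : ℝ} (hd : 1 ≤ d) (hdn : d ≤ n) :
    1 / (n - d + 1) ≤ 1 / n + d * (d - 1) / n ^ 2 := by
  have hn : 0 < n := by linarith
  rw [div_add_div _ _ hn.ne' (by positivity), div_le_div_iff₀ (by linarith) (by positivity)]
  -- the difference of the two sides is `n (d - 1)² (n - d)`
  nlinarith [mul_nonneg (mul_nonneg hn.le (sq_nonneg (d - 1))) (sub_nonneg.2 hdn)]

theorem mul_sub_one_div_le_descFactorial {d n : ℕ} (hdn : d ≤ n) :
    (d : ℝ) * ((d : ℝ) - 1) / ((n : ℝ) - d + 1)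
      ≤ (d.descFactorial 2 : ℝ) / n
        + ((d.descFactorial 4 + 4 * d.descFactorial 3 + 2 * d.descFactorial 2 : ℕ) : ℝ) / n ^ 2 := by
  rw [← descFactorial_two_sq, Nat.cast_pow, Nat.cast_descFactorial_two]
  rcases Nat.eq_zero_or_pos d with rfl | hd
  · simp
  have hd1 : (1 : ℝ) ≤ d := by exact_mod_cast hd
  have hbound := one_div_sub_add_one_le (n := n) hd1 (by exact_mod_cast hdn)
  calc (d : ℝ) * (d - 1) / (n - d + 1) = d * (d - 1) * (1 / (n - d + 1)) := by ring
    _ ≤ d * (d - 1) * (1 / n + d * (d - 1) / n ^ 2) := by gcongr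
    _ = _ := by ring

theorem stmt18 (n : ℕ) (hn : 2 ≤ n) (lam : ℝ) (hlam : 0 < lam)
    (c : ℝ)
    (hc : c = Real.exp lam / ∑ d ∈ Finset.range (n + 1), lam ^ d / d.factorial) :
    ∑ d ∈ Finset.range (n + 1),
        ((d : ℝ) * ((d : ℝ) - 1) / ((n : ℝ) - d + 1)) * c * (lam ^ d / d.factorial)
          * Real.exp (-lam)
      < lam ^ 2 / (n : ℝ) ^ 2 * ((n : ℝ) + 2 + 4 * lam + lam ^ 2) := by
  set S := ∑ d ∈ range (n + 1), lam ^ d / d.factorial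
  set M : ℕ → ℝ := fun r => ∑ d ∈ range (n + 1), (d.descFactorial r : ℝ) * (lam ^ d / d.factorial)
  have hS : 0 < S := sum_pos (fun _ _ => by positivity) nonempty_range_add_one
  have hnR : (0 : ℝ) < n := by exact_mod_cast (by omega : 0 < n)
  have hM : ∀ r, 0 < r → M r < lam ^ r * S := fun r hr =>
    sum_range_descFactorial_mul_pow_div_factorial_lt hlam hr (Nat.succ_pos n)
  calc _ = (∑ d ∈ range (n + 1),
          (d : ℝ) * ((d : ℝ) - 1) / ((n : ℝ) - d + 1) * (lam ^ d / d.factorial)) / S := by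
        rw [hc, sum_div]
        refine sum_congr rfl fun d _ => ?_
        rw [Real.exp_neg]
        field_simp
    _ ≤ (∑ d ∈ range (n + 1), ((d.descFactorial 2 : ℝ) / n
          + ((d.descFactorial 4 + 4 * d.descFactorial 3 + 2 * d.descFactorial 2 : ℕ) : ℝ) / n ^ 2)
            * (lam ^ d / d.factorial)) / S := by
        gcongr with d hd
        exact mul_sub_one_div_le_descFactorial (Nat.lt_succ_iff.mp (mem_range.mp hd))
    _ = (M 2 / n + (M 4 + 4 * M 3 + 2 * M 2) / n ^ 2) / S := by
        simp only [M, add_mul, div_mul_eq_mul_div, sum_add_distrib, ← sum_div, Nat.cast_add,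
          Nat.cast_mul, mul_assoc, ← mul_sum, Nat.cast_ofNat]
    _ < (lam ^ 2 * S / n + (lam ^ 4 * S + 4 * (lam ^ 3 * S) + 2 * (lam ^ 2 * S)) / n ^ 2) / S := by
        have h2 := hM 2 two_pos
        have h3 := hM 3 three_pos
        have h4 := hM 4 four_pos
        gcongr ?_ / S
        exact add_lt_add (div_lt_div_of_pos_right h2 hnR)
          (div_lt_div_of_pos_right (by linarith) (by positivity))
    _ = _ := by field_simp; ring
end
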